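/- arXiv:1810.05274 — 2 statements merged into one kernel-verified Lean document; each statement's English description precedes it below -/
import Mathlib

section
/- Let A be a unital associative ℂ-algebra containing elements c_0, …, c_{2m−1} satisfying the Majorana relations. Then for all pairwise distinct i, j, k, l in {0,…,m−1}, the double-excitation operator satisfies a_i† a_j† a_k a_l + a_l† a_k† a_j a_i = (1/8)·A_{ij} A_{kl}·(−1 − B_i B_j + B_i B_k + B_i B_l + B_j B_k + B_j B_l − B_k B_l − B_i B_j B_k B_l). -/
set_option linter.unusedSectionVars false
set_option maxHeartbeats 1000000

lemma swap2' {A : Type*} [Ring A] (x y z : A)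
    (hxz : x*z = -(z*x)) (hyz : y*z = -(z*y)) : (x*y)*z = z*(x*y) := by
  rw [mul_assoc, hyz, mul_neg, ← mul_assoc, hxz, neg_mul, neg_neg, mul_assoc]

lemma swap22' {A : Type*} [Ring A] (x y z w : A)
    (hxz : x*z = -(z*x)) (hyz : y*z = -(z*y))
    (hxw : x*w = -(w*x)) (hyw : y*w = -(w*y)) : (x*y)*(z*w) = (z*w)*(x*y) := by
  have h1 : (x*y)*z = z*(x*y) := swap2' x y z hxz hyz
  have h2 : (x*y)*w = w*(x*y) := swap2' x y w hxw hyw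
  rw [← mul_assoc, h1, mul_assoc, h2, ← mul_assoc]

lemma majKey {A : Type*} [Ring A] (u1 u2 u3 u4 b1 b2 b3 b4 : A)
    (h21 : u2*u1 = -(u1*u2)) (h31 : u3*u1 = -(u1*u3)) (h41 : u4*u1 = -(u1*u4))
    (h32 : u3*u2 = -(u2*u3)) (h42 : u4*u2 = -(u2*u4)) (h43 : u4*u3 = -(u3*u4))
    (hb12 : b1*u2 = u2*b1) (hb13 : b1*u3 = u3*b1) (hb14 : b1*u4 = u4*b1)
    (hb21 : b2*u1 = u1*b2) (hb23 : b2*u3 = u3*b2) (hb24 : b2*u4 = u4*b2)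
    (hb31 : b3*u1 = u1*b3) (hb32 : b3*u2 = u2*b3) (hb34 : b3*u4 = u4*b3)
    (hb41 : b4*u1 = u1*b4) (hb42 : b4*u2 = u2*b4) (hb43 : b4*u3 = u3*b4)
    (hbb21 : b2*b1 = b1*b2) (hbb31 : b3*b1 = b1*b3) (hbb41 : b4*b1 = b1*b4)
    (hbb32 : b3*b2 = b2*b3) (hbb42 : b4*b2 = b2*b4) (hbb43 : b4*b3 = b3*b4) :
    u1*((1+b1)*(u2*((1+b2)*(u3*((1-b3)*(u4*(1-b4))))))) +
    u4*((1+b4)*(u3*((1+b3)*(u2*((1-b2)*(u1*(1-b1))))))) =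
    (u1*(u2*(u3*u4))) *
      (1 + b1*b2 - b1*b3 - b1*b4 - b2*b3 - b2*b4 + b3*b4 + b1*(b2*(b3*b4))) +
    (u1*(u2*(u3*u4))) *
      (1 + b1*b2 - b1*b3 - b1*b4 - b2*b3 - b2*b4 + b3*b4 + b1*(b2*(b3*b4))) := by
  have h21' : ∀ z, u2*(u1*z) = -(u1*(u2*z)) := fun z => by rw [← mul_assoc, h21, neg_mul, mul_assoc]
  have h31' : ∀ z, u3*(u1*z) = -(u1*(u3*z)) := fun z => by rw [← mul_assoc, h31, neg_mul, mul_assoc]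
  have h41' : ∀ z, u4*(u1*z) = -(u1*(u4*z)) := fun z => by rw [← mul_assoc, h41, neg_mul, mul_assoc]
  have h32' : ∀ z, u3*(u2*z) = -(u2*(u3*z)) := fun z => by rw [← mul_assoc, h32, neg_mul, mul_assoc]
  have h42' : ∀ z, u4*(u2*z) = -(u2*(u4*z)) := fun z => by rw [← mul_assoc, h42, neg_mul, mul_assoc]
  have h43' : ∀ z, u4*(u3*z) = -(u3*(u4*z)) := fun z => by rw [← mul_assoc, h43, neg_mul, mul_assoc]
  have hb12' : ∀ z, b1*(u2*z) = u2*(b1*z) := fun z => by rw [← mul_assoc, hb12, mul_assoc]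
  have hb13' : ∀ z, b1*(u3*z) = u3*(b1*z) := fun z => by rw [← mul_assoc, hb13, mul_assoc]
  have hb14' : ∀ z, b1*(u4*z) = u4*(b1*z) := fun z => by rw [← mul_assoc, hb14, mul_assoc]
  have hb21' : ∀ z, b2*(u1*z) = u1*(b2*z) := fun z => by rw [← mul_assoc, hb21, mul_assoc]
  have hb23' : ∀ z, b2*(u3*z) = u3*(b2*z) := fun z => by rw [← mul_assoc, hb23, mul_assoc]
  have hb24' : ∀ z, b2*(u4*z) = u4*(b2*z) := fun z => by rw [← mul_assoc, hb24, mul_assoc]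
  have hb31' : ∀ z, b3*(u1*z) = u1*(b3*z) := fun z => by rw [← mul_assoc, hb31, mul_assoc]
  have hb32' : ∀ z, b3*(u2*z) = u2*(b3*z) := fun z => by rw [← mul_assoc, hb32, mul_assoc]
  have hb34' : ∀ z, b3*(u4*z) = u4*(b3*z) := fun z => by rw [← mul_assoc, hb34, mul_assoc]
  have hb41' : ∀ z, b4*(u1*z) = u1*(b4*z) := fun z => by rw [← mul_assoc, hb41, mul_assoc]
  have hb42' : ∀ z, b4*(u2*z) = u2*(b4*z) := fun z => by rw [← mul_assoc, hb42, mul_assoc]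
  have hb43' : ∀ z, b4*(u3*z) = u3*(b4*z) := fun z => by rw [← mul_assoc, hb43, mul_assoc]
  have hbb21' : ∀ z, b2*(b1*z) = b1*(b2*z) := fun z => by rw [← mul_assoc, hbb21, mul_assoc]
  have hbb31' : ∀ z, b3*(b1*z) = b1*(b3*z) := fun z => by rw [← mul_assoc, hbb31, mul_assoc]
  have hbb41' : ∀ z, b4*(b1*z) = b1*(b4*z) := fun z => by rw [← mul_assoc, hbb41, mul_assoc]
  have hbb32' : ∀ z, b3*(b2*z) = b2*(b3*z) := fun z => by rw [← mul_assoc, hbb32, mul_assoc]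
  have hbb42' : ∀ z, b4*(b2*z) = b2*(b4*z) := fun z => by rw [← mul_assoc, hbb42, mul_assoc]
  have hbb43' : ∀ z, b4*(b3*z) = b3*(b4*z) := fun z => by rw [← mul_assoc, hbb43, mul_assoc]
  simp only [mul_add, add_mul, mul_sub, sub_mul, mul_one, one_mul, mul_neg, neg_mul,
    neg_neg, mul_assoc,
    h21, h31, h41, h32, h42, h43, h21', h31', h41', h32', h42', h43',
    hb12, hb13, hb14, hb21, hb23, hb24, hb31, hb32, hb34, hb41, hb42, hb43,
    hb12', hb13', hb14', hb21', hb23', hb24', hb31', hb32', hb34', hb41', hb42', hb43',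
    hbb21, hbb31, hbb41, hbb32, hbb42, hbb43,
    hbb21', hbb31', hbb41', hbb32', hbb42', hbb43']
  abel


/-- The even Majorana mode `c_{2j}` associated with fermionic mode `j`. -/
noncomputable def majEven {A : Type*} [Ring A] [Algebra ℂ A] {m : ℕ}
    (c : Fin (2 * m) → A) (j : Fin m) : A :=
  c ⟨2 * j.1, by have := j.isLt; omega⟩

/-- The odd Majorana mode `c_{2j+1}` associated with fermionic mode `j`. -/
noncomputable def majOdd {A : Type*} [Ring A] [Algebra ℂ A] {m : ℕ}
    (c : Fin (2 * m) → A) (j : Fin m) : A :=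
  c ⟨2 * j.1 + 1, by have := j.isLt; omega⟩

/-- The annihilation operator `a_j = (c_{2j} + i c_{2j+1})/2`. -/
noncomputable def aAnn {A : Type*} [Ring A] [Algebra ℂ A] {m : ℕ}
    (c : Fin (2 * m) → A) (j : Fin m) : A :=
  ((1 : ℂ) / 2) • (majEven c j + Complex.I • majOdd c j)

/-- The creation operator `a_j† = (c_{2j} - i c_{2j+1})/2`. -/
noncomputable def aCre {A : Type*} [Ring A] [Algebra ℂ A] {m : ℕ}
    (c : Fin (2 * m) → A) (j : Fin m) : A :=
  ((1 : ℂ) / 2) • (majEven c j - Complex.I • majOdd c j)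

/-- The vertex operator `B_j = -i c_{2j} c_{2j+1}`. -/
noncomputable def Bop {A : Type*} [Ring A] [Algebra ℂ A] {m : ℕ}
    (c : Fin (2 * m) → A) (j : Fin m) : A :=
  (-Complex.I) • (majEven c j * majOdd c j)

/-- The edge operator `A_{jk} = -i c_{2j} c_{2k}`. -/
noncomputable def Aop {A : Type*} [Ring A] [Algebra ℂ A] {m : ℕ}
    (c : Fin (2 * m) → A) (j k : Fin m) : A :=
  (-Complex.I) • (majEven c j * majEven c k)


section
variable {A : Type*} [Ring A] [Algebra ℂ A] {m : ℕ} (c : Fin (2 * m) → A)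
  (hmaj : ∀ p q, c p * c q + c q * c p = if p = q then (2 : A) else 0)

include hmaj

lemma maj_sq (p : Fin (2*m)) : c p * c p = 1 := by
  have h := hmaj p p
  rw [if_pos rfl] at h
  have h2 : (2:ℂ) • (c p * c p) = (2:ℂ) • (1:A) := by
    rw [two_smul, two_smul, h]; norm_num
  have := congrArg (fun x => ((1:ℂ)/2) • x) h2
  simpa [smul_smul] using this

lemma maj_swap {p q : Fin (2*m)} (h : p ≠ q) : c p * c q = -(c q * c p) := by
  have hh := hmaj p q
  rw [if_neg h] at hh
  exact eq_neg_of_add_eq_zero_left hh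

lemma maj_uu {p q : Fin m} (h : p ≠ q) :
    majEven c p * majEven c q = -(majEven c q * majEven c p) :=
  maj_swap c hmaj (by
    intro hc
    exact h (Fin.ext (by have := congrArg Fin.val hc; simp at this; omega)))

lemma maj_uv (p : Fin m) (q : Fin m) :
    majEven c p * majOdd c q = -(majOdd c q * majEven c p) :=
  maj_swap c hmaj (by
    intro hc
    have := congrArg Fin.val hc; simp [majEven, majOdd] at this; omega)

lemma maj_vu (p : Fin m) (q : Fin m) :
    majOdd c p * majEven c q = -(majEven c q * majOdd c p) :=
  maj_swap c hmaj (by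
    intro hc
    have := congrArg Fin.val hc; simp [majEven, majOdd] at this; omega)

lemma maj_vv {p q : Fin m} (h : p ≠ q) :
    majOdd c p * majOdd c q = -(majOdd c q * majOdd c p) :=
  maj_swap c hmaj (by
    intro hc
    exact h (Fin.ext (by have := congrArg Fin.val hc; simp [majEven, majOdd] at this; omega)))

lemma maj_usq (p : Fin m) : majEven c p * majEven c p = 1 := maj_sq c hmaj _

lemma Bop_comm_even {p q : Fin m} (h : p ≠ q) :
    Bop c p * majEven c q = majEven c q * Bop c p := by
  unfold Bop
  rw [smul_mul_assoc, mul_smul_comm,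
    swap2' _ _ _ (maj_uu c hmaj h) (maj_vu c hmaj p q)]

lemma Bop_comm {p q : Fin m} (h : p ≠ q) :
    Bop c p * Bop c q = Bop c q * Bop c p := by
  unfold Bop
  rw [smul_mul_assoc, mul_smul_comm, smul_mul_assoc, mul_smul_comm, smul_smul, smul_smul,
    mul_comm (-Complex.I) (-Complex.I),
    swap22' _ _ _ _ (maj_uu c hmaj h) (maj_vu c hmaj p q) (maj_uv c hmaj p q)
      (maj_vv c hmaj h)]

lemma aCre_eq (p : Fin m) :
    aCre c p = ((1:ℂ)/2) • (majEven c p * (1 + Bop c p)) := by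
  unfold aCre Bop
  rw [mul_add, mul_one, mul_smul_comm, ← mul_assoc, maj_usq c hmaj, one_mul]
  congr 1
  rw [neg_smul, sub_eq_add_neg]

lemma aAnn_eq (p : Fin m) :
    aAnn c p = ((1:ℂ)/2) • (majEven c p * (1 - Bop c p)) := by
  unfold aAnn Bop
  rw [mul_sub, mul_one, mul_smul_comm, ← mul_assoc, maj_usq c hmaj, one_mul]
  congr 1
  rw [neg_smul, sub_neg_eq_add]

lemma aop_prod (p q r s : Fin m) :
    Aop c p q * Aop c r s =
      (-1:ℂ) • (majEven c p * (majEven c q * (majEven c r * majEven c s))) := by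
  unfold Aop
  rw [smul_mul_assoc, mul_smul_comm, smul_smul, neg_mul_neg, Complex.I_mul_I, mul_assoc]

end
/-- Double-excitation term identity:
`a_i† a_j† a_k a_l + a_l† a_k† a_j a_i = (1/8) A_{ij} A_{kl} (−1 − B_i B_j + B_i B_k + B_i B_l
  + B_j B_k + B_j B_l − B_k B_l − B_i B_j B_k B_l)`. -/
theorem stmt5 {A : Type*} [Ring A] [Algebra ℂ A] {m : ℕ} (c : Fin (2 * m) → A)
    (hmaj : ∀ p q, c p * c q + c q * c p = if p = q then (2 : A) else 0)
    (i j k l : Fin m) (hij : i ≠ j) (hik : i ≠ k) (hil : i ≠ l)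
    (hjk : j ≠ k) (hjl : j ≠ l) (hkl : k ≠ l) :
    aCre c i * aCre c j * aAnn c k * aAnn c l +
      aCre c l * aCre c k * aAnn c j * aAnn c i =
      ((1 : ℂ) / 8) • (Aop c i j * Aop c k l *
        (-1 - Bop c i * Bop c j + Bop c i * Bop c k + Bop c i * Bop c l
          + Bop c j * Bop c k + Bop c j * Bop c l - Bop c k * Bop c l
          - Bop c i * Bop c j * Bop c k * Bop c l)) := by
  have hkey := majKey (majEven c i) (majEven c j) (majEven c k) (majEven c l)
    (Bop c i) (Bop c j) (Bop c k) (Bop c l)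
    (maj_uu c hmaj hij.symm) (maj_uu c hmaj hik.symm) (maj_uu c hmaj hil.symm)
    (maj_uu c hmaj hjk.symm) (maj_uu c hmaj hjl.symm) (maj_uu c hmaj hkl.symm)
    (Bop_comm_even c hmaj hij) (Bop_comm_even c hmaj hik) (Bop_comm_even c hmaj hil)
    (Bop_comm_even c hmaj hij.symm) (Bop_comm_even c hmaj hjk) (Bop_comm_even c hmaj hjl)
    (Bop_comm_even c hmaj hik.symm) (Bop_comm_even c hmaj hjk.symm) (Bop_comm_even c hmaj hkl)
    (Bop_comm_even c hmaj hil.symm) (Bop_comm_even c hmaj hjl.symm) (Bop_comm_even c hmaj hkl.symm)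
    (Bop_comm c hmaj hij.symm) (Bop_comm c hmaj hik.symm) (Bop_comm c hmaj hil.symm)
    (Bop_comm c hmaj hjk.symm) (Bop_comm c hmaj hjl.symm) (Bop_comm c hmaj hkl.symm)
  have hQ : (1 + Bop c i*Bop c j - Bop c i*Bop c k - Bop c i*Bop c l - Bop c j*Bop c k
      - Bop c j*Bop c l + Bop c k*Bop c l + Bop c i*(Bop c j*(Bop c k*Bop c l))) =
      -(-1 - Bop c i * Bop c j + Bop c i * Bop c k + Bop c i * Bop c l
        + Bop c j * Bop c k + Bop c j * Bop c l - Bop c k * Bop c l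
        - Bop c i * Bop c j * Bop c k * Bop c l) := by
    noncomm_ring
  rw [aCre_eq c hmaj i, aCre_eq c hmaj j, aAnn_eq c hmaj k, aAnn_eq c hmaj l,
    aCre_eq c hmaj l, aCre_eq c hmaj k, aAnn_eq c hmaj j, aAnn_eq c hmaj i,
    aop_prod c hmaj i j k l]
  simp only [smul_mul_assoc, mul_smul_comm, smul_smul, mul_assoc]
  rw [← smul_add, hkey, hQ]
  simp only [mul_neg, mul_assoc, smul_neg, smul_add, smul_smul]
  module
end

section
/- Under the abstract edge-operator hypotheses, assume G is connected, fix a spanning tree T of G with a root vertex r, and for each vertex j let ω^j be the unique path in T from r to j; for an edge e traversed from u to v let ζ^e = ω^u ∘ e ∘ ω̄^v (a loop based at r). Then for every loop ζ of length s, writing e^t for the t-th edge of ζ (traversed from ζ(t−1) to ζ(t)), one has A(ζ) = A(ζ^{e^1}) A(ζ^{e^2}) ⋯ A(ζ^{e^s}); moreover A(ζ^e) = I whenever e ∈ T. Consequently every loop operator A(ζ) belongs to the subgroup generated by the fundamental loop operators {A(ζ^e) : e ∈ E, e ∉ T}. -/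
/-!
Two edge operators commute up to the sign `(-1)^{|{a,b} ∩ {x,y}|}`, which is a product of one
sign per endpoint of `xy`. Along a path these signs telescope, so `A_{ab}` commutes with every loop
operator. Since `A(ω̄) A(ω) = 1` for every path, the product of the fundamental loop operators along
a loop `ζ` telescopes to `A(ω^{ζ(0)}) A(ζ) A(ω̄^{ζ(0)})`, which is `A(ζ)` by that commutation.
In a tree the unique path between two vertices absorbs every walk between them, each backtrack
`i A_{xy} · i A_{yx} = 1` cancelling; so a closed walk in `T`, in particular a fundamental loop of a
tree edge, has trivial operator.
-/

open Matrix

/-- The operator of a path `ζ(0), …, ζ(s)`: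
`A(ζ) = i^s A_{ζ(0)ζ(1)} A_{ζ(1)ζ(2)} ⋯ A_{ζ(s-1)ζ(s)}`. -/
noncomputable def pathOp {V : Type*} {N : ℕ}
    (A : V → V → Matrix (Fin N) (Fin N) ℂ) (s : ℕ) (ζ : ℕ → V) :
    Matrix (Fin N) (Fin N) ℂ :=
  (Complex.I ^ s) • (((List.range s).map (fun t => A (ζ t) (ζ (t + 1)))).prod)

/-- `ζ(0), …, ζ(s)` is a path in the graph `G`. -/
def IsPathIn {V : Type*} (G : SimpleGraph V) (s : ℕ) (ζ : ℕ → V) : Prop :=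
  ∀ t < s, G.Adj (ζ t) (ζ (t + 1))

/-- The fundamental loop `ζ^e = ω^u ∘ e ∘ ω̄^v` associated with an edge traversed from `u`
to `v`: follow the tree path `ω^u` from the root to `u`, cross the edge to `v`, then follow
the reversed tree path `ω̄^v` from `v` back to the root.  Its length is `len u + 1 + len v`. -/
def fundLoop {V : Type*} (len : V → ℕ) (ω : V → ℕ → V) (u v : V) : ℕ → V :=
  fun t => if t ≤ len u then ω u t else ω v (len v - (t - (len u + 1)))

section PathOp

variable {V : Type*} {N : ℕ} (A : V → V → Matrix (Fin N) (Fin N) ℂ)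

lemma pathOp_eq_prod (s : ℕ) (ζ : ℕ → V) :
    pathOp A s ζ = ((List.range s).map fun t => Complex.I • A (ζ t) (ζ (t + 1))).prod := by
  induction s with
  | zero => simp [pathOp]
  | succ s ih =>
    rw [List.range_succ, List.map_append, List.prod_append, ← ih, List.map_singleton,
      List.prod_singleton, pathOp, pathOp, List.range_succ, List.map_append, List.prod_append,
      List.map_singleton, List.prod_singleton, smul_mul_smul_comm, pow_succ]

lemma pathOp_zero (ζ : ℕ → V) : pathOp A 0 ζ = 1 := by
  simp [pathOp]

lemma pathOp_succ (s : ℕ) (ζ : ℕ → V) :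
    pathOp A (s + 1) ζ = pathOp A s ζ * (Complex.I • A (ζ s) (ζ (s + 1))) := by
  simp only [pathOp_eq_prod, List.range_succ, List.map_append, List.prod_append,
    List.map_singleton, List.prod_singleton]

lemma pathOp_succ' (s : ℕ) (ζ : ℕ → V) :
    pathOp A (s + 1) ζ = (Complex.I • A (ζ 0) (ζ 1)) * pathOp A s (fun t => ζ (t + 1)) := by
  simp only [pathOp_eq_prod, List.range_succ_eq_map, List.map_cons, List.prod_cons, List.map_map]
  rfl

lemma pathOp_add (m n : ℕ) (ζ : ℕ → V) :
    pathOp A (m + n) ζ = pathOp A m ζ * pathOp A n (fun t => ζ (m + t)) := by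
  induction n with
  | zero => rw [pathOp_zero, mul_one, add_zero]
  | succ n ih => rw [← add_assoc, pathOp_succ, ih, pathOp_succ, mul_assoc, add_assoc]

lemma pathOp_congr {s : ℕ} {ζ η : ℕ → V} (h : ∀ t ≤ s, ζ t = η t) :
    pathOp A s ζ = pathOp A s η := by
  simp only [pathOp_eq_prod]
  congr 1
  refine List.map_congr_left fun t ht => ?_
  rw [List.mem_range] at ht
  rw [h t ht.le, h (t + 1) ht]

variable {G : SimpleGraph V}

lemma I_smul_mul_I_smul_of_adj (hsq : ∀ j k, G.Adj j k → A j k * A j k = 1)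
    (hanti : ∀ j k, G.Adj j k → A k j = - A j k) {x y : V} (h : G.Adj x y) :
    (Complex.I • A x y) * (Complex.I • A y x) = 1 := by
  rw [smul_mul_smul_comm, Complex.I_mul_I, hanti x y h, mul_neg, hsq x y h, neg_smul, smul_neg,
    one_smul, neg_neg]

lemma pathOp_reverse_mul (hsq : ∀ j k, G.Adj j k → A j k * A j k = 1)
    (hanti : ∀ j k, G.Adj j k → A k j = - A j k) {s : ℕ} {ζ : ℕ → V} (hζ : IsPathIn G s ζ) :
    pathOp A s (fun t => ζ (s - t)) * pathOp A s ζ = 1 := by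
  induction s with
  | zero => simp [pathOp_zero]
  | succ s ih =>
    have hrev : pathOp A s (fun t => ζ (s + 1 - (t + 1))) = pathOp A s (fun t => ζ (s - t)) :=
      pathOp_congr A fun t _ => by rw [Nat.add_sub_add_right]
    rw [pathOp_succ', hrev, pathOp_succ, Nat.sub_zero, Nat.add_sub_cancel, mul_assoc,
      ← mul_assoc (pathOp A s _), ih fun t ht => hζ t (by omega), one_mul,
      I_smul_mul_I_smul_of_adj A hsq hanti (hζ s (by omega)).symm]

end PathOp

section Sign

variable {V : Type*} [DecidableEq V] {N : ℕ} (A : V → V → Matrix (Fin N) (Fin N) ℂ)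
  {G : SimpleGraph V}

/-- `incSign a b x * incSign a b y = (-1) ^ |{a, b} ∩ {x, y}|` when `a ≠ b` and `x ≠ y`. -/
def incSign (a b x : V) : ℂ := if x = a ∨ x = b then -1 else 1

lemma incSign_mul_self (a b x : V) : incSign a b x * incSign a b x = 1 := by
  unfold incSign
  split_ifs <;> norm_num

lemma mul_eq_incSign_smul_mul (hanti : ∀ j k, G.Adj j k → A k j = - A j k)
    (hcomm : ∀ j k j' k', G.Adj j k → G.Adj j' k' → s(j, k) ≠ s(j', k') →
      A j k * A j' k' =
        ((-1 : ℂ) ^ ((if j = j' ∨ j = k' then 1 else 0) + (if k = j' ∨ k = k' then 1 else 0))) •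
          (A j' k' * A j k))
    {a b x y : V} (hab : G.Adj a b) (hxy : G.Adj x y) :
    A a b * A x y = (incSign a b x * incSign a b y) • (A x y * A a b) := by
  by_cases hs : s(x, y) = s(a, b)
  · rcases Sym2.eq_iff.1 hs with ⟨rfl, rfl⟩ | ⟨rfl, rfl⟩
    · simp [incSign]
    · simp [incSign, hanti x y hxy]
  · have hsign : (-1 : ℂ) ^ ((if x = a ∨ x = b then 1 else 0) + (if y = a ∨ y = b then 1 else 0))
        = incSign a b x * incSign a b y := by
      simp only [incSign, pow_add]
      split_ifs <;> norm_num
    have hsign_sq : (incSign a b x * incSign a b y) * (incSign a b x * incSign a b y) = 1 := by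
      rw [mul_mul_mul_comm, incSign_mul_self, incSign_mul_self, one_mul]
    rw [hcomm x y a b hxy hab hs, hsign, smul_smul, hsign_sq, one_smul]

lemma mul_pathOp_eq_incSign_smul {a b : V}
    (hsign : ∀ x y, G.Adj x y → A a b * A x y = (incSign a b x * incSign a b y) • (A x y * A a b))
    {s : ℕ} {ζ : ℕ → V} (hζ : IsPathIn G s ζ) :
    A a b * pathOp A s ζ = (incSign a b (ζ 0) * incSign a b (ζ s)) • (pathOp A s ζ * A a b) := by
  induction s with
  | zero => rw [pathOp_zero, incSign_mul_self, one_smul, one_mul, mul_one]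
  | succ s ih =>
    rw [pathOp_succ, ← mul_assoc, ih fun t ht => hζ t (by omega), smul_mul_assoc, mul_assoc,
      mul_smul_comm, hsign _ _ (hζ s (by omega))]
    simp only [smul_mul_assoc, mul_smul_comm, smul_smul, mul_assoc]
    congr 1
    linear_combination (incSign a b (ζ 0) * incSign a b (ζ (s + 1)) * Complex.I) *
      incSign_mul_self a b (ζ s)

lemma commute_pathOp_of_loop
    (hsign : ∀ a b x y, G.Adj a b → G.Adj x y →
      A a b * A x y = (incSign a b x * incSign a b y) • (A x y * A a b))
    {n : ℕ} {η : ℕ → V} (hη : IsPathIn G n η)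
    {s : ℕ} {ζ : ℕ → V} (hζ : IsPathIn G s ζ) (hloop : ζ s = ζ 0) :
    Commute (pathOp A n η) (pathOp A s ζ) := by
  rw [pathOp_eq_prod A n η]
  refine Commute.list_prod_left _ _ fun M hM => ?_
  obtain ⟨t, ht, rfl⟩ := List.mem_map.1 hM
  refine Commute.smul_left ?_ _
  have hedge := mul_pathOp_eq_incSign_smul A (hsign _ _ · · (hη t (List.mem_range.1 ht))) hζ
  rwa [hloop, incSign_mul_self, one_smul] at hedge

end Sign

lemma List.prod_range_map_telescope {M : Type*} [Monoid M] (f e g : ℕ → M)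
    (hfg : ∀ t, f t * g t = 1) (hgf : ∀ t, g t * f t = 1) (s : ℕ) :
    ((List.range s).map fun t => f t * e t * g (t + 1)).prod =
      f 0 * ((List.range s).map e).prod * g s := by
  induction s with
  | zero => simp [hfg]
  | succ s ih =>
    simp only [List.range_succ, List.map_append, List.prod_append, List.map_singleton,
      List.prod_singleton, ih]
    simp only [mul_assoc, ← mul_assoc (g s), hgf, one_mul]

section FundLoop

variable {V : Type*} {N : ℕ} (A : V → V → Matrix (Fin N) (Fin N) ℂ) {G : SimpleGraph V}
  (len : V → ℕ) (ω : V → ℕ → V)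

lemma fundLoop_of_le {u v : V} {t : ℕ} (ht : t ≤ len u) : fundLoop len ω u v t = ω u t :=
  if_pos ht

lemma fundLoop_add (u v : V) (t : ℕ) :
    fundLoop len ω u v (len u + 1 + t) = ω v (len v - t) := by
  rw [fundLoop, if_neg (by omega), Nat.add_sub_cancel_left]

lemma fundLoop_zero (u v : V) : fundLoop len ω u v 0 = ω u 0 :=
  fundLoop_of_le len ω (Nat.zero_le _)

lemma fundLoop_length (u v : V) : fundLoop len ω u v (len u + 1 + len v) = ω v 0 := by
  rw [fundLoop_add, Nat.sub_self]

variable {len ω}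

lemma fundLoop_isPathIn (hωend : ∀ j, ω j (len j) = j)
    (hωpath : ∀ j, IsPathIn G (len j) (ω j)) {u v : V} (huv : G.Adj u v) :
    IsPathIn G (len u + 1 + len v) (fundLoop len ω u v) := by
  intro t ht
  rcases lt_trichotomy t (len u) with h | rfl | h
  · rw [fundLoop_of_le len ω h.le, fundLoop_of_le len ω h]
    exact hωpath u t h
  · rw [fundLoop_of_le len ω le_rfl, ← add_zero (len u + 1), fundLoop_add, hωend, Nat.sub_zero,
      hωend]
    exact huv
  · obtain ⟨j, rfl⟩ : ∃ j, t = len u + 1 + j := ⟨t - (len u + 1), by omega⟩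
    rw [fundLoop_add, add_assoc (len u + 1) j 1, fundLoop_add,
      show len v - j = len v - (j + 1) + 1 by omega]
    exact (hωpath v _ (by omega)).symm

lemma pathOp_fundLoop (hωend : ∀ j, ω j (len j) = j) (u v : V) :
    pathOp A (len u + 1 + len v) (fundLoop len ω u v) =
      pathOp A (len u) (ω u) * (Complex.I • A u v) *
        pathOp A (len v) (fun t => ω v (len v - t)) := by
  rw [pathOp_add, pathOp_succ, fundLoop_of_le len ω le_rfl, ← add_zero (len u + 1), fundLoop_add,
    add_zero, hωend, Nat.sub_zero, hωend,
    pathOp_congr A (fun t ht => fundLoop_of_le len ω ht),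
    pathOp_congr A (fun t _ => fundLoop_add len ω u v t)]

lemma pathOp_eq_prod_pathOp_fundLoop [DecidableEq V] (hsq : ∀ j k, G.Adj j k → A j k * A j k = 1)
    (hanti : ∀ j k, G.Adj j k → A k j = - A j k)
    (hsign : ∀ a b x y, G.Adj a b → G.Adj x y →
      A a b * A x y = (incSign a b x * incSign a b y) • (A x y * A a b))
    (hωend : ∀ j, ω j (len j) = j) (hωpath : ∀ j, IsPathIn G (len j) (ω j))
    {s : ℕ} {ζ : ℕ → V} (hζ : IsPathIn G s ζ) (hloop : ζ s = ζ 0) :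
    pathOp A s ζ = ((List.range s).map fun t =>
      pathOp A (len (ζ t) + 1 + len (ζ (t + 1))) (fundLoop len ω (ζ t) (ζ (t + 1)))).prod := by
  set Ω := fun j => pathOp A (len j) (ω j)
  set Ωrev := fun j => pathOp A (len j) (fun t => ω j (len j - t))
  have hrev_mul (j : V) : Ωrev j * Ω j = 1 := pathOp_reverse_mul A hsq hanti (hωpath j)
  have hmul_rev (j : V) : Ω j * Ωrev j = 1 := mul_eq_one_comm.1 (hrev_mul j)
  calc pathOp A s ζ = Ω (ζ 0) * pathOp A s ζ * Ωrev (ζ s) := by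
        rw [(commute_pathOp_of_loop A hsign (hωpath (ζ 0)) hζ hloop).eq, mul_assoc, hloop,
          hmul_rev, mul_one]
    _ = _ := by
        rw [pathOp_eq_prod, ← List.prod_range_map_telescope _ _ _ (fun t => hmul_rev (ζ t))
          (fun t => hrev_mul (ζ t))]
        simp only [pathOp_fundLoop A hωend]
        rfl

end FundLoop

section Tree

open SimpleGraph

variable {V : Type*} {N : ℕ} (A : V → V → Matrix (Fin N) (Fin N) ℂ) {T : SimpleGraph V}

lemma SimpleGraph.IsAcyclic.eq_of_isPath (hT : T.IsAcyclic) {x y : V} {p q : T.Walk x y}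
    (hp : p.IsPath) (hq : q.IsPath) : p = q :=
  congrArg Subtype.val ((hT.subsingleton_path x y).elim ⟨p, hp⟩ ⟨q, hq⟩)

noncomputable def walkOp {x y : V} (w : T.Walk x y) : Matrix (Fin N) (Fin N) ℂ :=
  (w.darts.map fun d => Complex.I • A d.fst d.snd).prod

@[simp] lemma walkOp_nil {x : V} : walkOp A (Walk.nil : T.Walk x x) = 1 := rfl

@[simp] lemma walkOp_cons {x y z : V} (h : T.Adj x y) (w : T.Walk y z) :
    walkOp A (Walk.cons h w) = (Complex.I • A x y) * walkOp A w := rfl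

lemma walkOp_append {x y z : V} (w : T.Walk x y) (w' : T.Walk y z) :
    walkOp A (w.append w') = walkOp A w * walkOp A w' := by
  simp only [walkOp, Walk.darts_append, List.map_append, List.prod_append]

def IsPathIn.toWalk : {s : ℕ} → {ζ : ℕ → V} → IsPathIn T s ζ → T.Walk (ζ 0) (ζ s)
  | 0, _, _ => Walk.nil
  | s + 1, ζ, h => Walk.cons (h 0 s.succ_pos)
      (IsPathIn.toWalk (ζ := fun t => ζ (t + 1)) fun t ht => h (t + 1) (by omega))

lemma pathOp_eq_walkOp {s : ℕ} {ζ : ℕ → V} (h : IsPathIn T s ζ) :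
    pathOp A s ζ = walkOp A h.toWalk := by
  induction s generalizing ζ with
  | zero => exact pathOp_zero A ζ
  | succ s ih =>
    rw [pathOp_succ', ih]
    rfl

lemma walkOp_eq_of_isPath [DecidableEq V] (hT : T.IsAcyclic)
    (hsq : ∀ j k, T.Adj j k → A j k * A j k = 1)
    (hanti : ∀ j k, T.Adj j k → A k j = - A j k) {x y : V} (w p : T.Walk x y) (hp : p.IsPath) :
    walkOp A w = walkOp A p := by
  induction w with
  | nil => rw [hT.eq_of_isPath hp Walk.IsPath.nil]
  | @cons x c y h q ih =>
    rw [walkOp_cons, ih q.bypass q.bypass_isPath]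
    by_cases hc : c ∈ p.support
    · have htake : p.takeUntil c hc = Walk.cons h Walk.nil :=
        hT.eq_of_isPath (hp.takeUntil hc) (Path.singleton h).2
      have hdrop : q.bypass = p.dropUntil c hc :=
        hT.eq_of_isPath q.bypass_isPath (hp.dropUntil hc)
      rw [← p.take_spec hc, walkOp_append, htake, hdrop, walkOp_cons, walkOp_nil, mul_one]
    · have hback : q.bypass = Walk.cons h.symm p :=
        hT.eq_of_isPath q.bypass_isPath ((Walk.cons_isPath_iff _ _).2 ⟨hp, hc⟩)
      rw [hback, walkOp_cons, ← mul_assoc, I_smul_mul_I_smul_of_adj A hsq hanti h, one_mul]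

lemma pathOp_eq_one_of_isAcyclic [DecidableEq V] (hT : T.IsAcyclic)
    (hsq : ∀ j k, T.Adj j k → A j k * A j k = 1) (hanti : ∀ j k, T.Adj j k → A k j = - A j k)
    {s : ℕ} {ζ : ℕ → V} (hζ : IsPathIn T s ζ) (hloop : ζ s = ζ 0) :
    pathOp A s ζ = 1 := by
  rw [pathOp_eq_walkOp A hζ]
  generalize hζ.toWalk = w
  revert w
  rw [hloop]
  exact fun w => walkOp_eq_of_isPath A hT hsq hanti w Walk.nil Walk.IsPath.nil

end Tree

theorem stmt7_general {V : Type*} [DecidableEq V] (G : SimpleGraph V) {N : ℕ}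
    (A : V → V → Matrix (Fin N) (Fin N) ℂ)
    (hsq : ∀ j k, G.Adj j k → A j k * A j k = 1)
    (hanti : ∀ j k, G.Adj j k → A k j = - A j k)
    (hcomm : ∀ j k j' k', G.Adj j k → G.Adj j' k' → s(j, k) ≠ s(j', k') →
      A j k * A j' k' =
        ((-1 : ℂ) ^ ((if j = j' ∨ j = k' then 1 else 0) + (if k = j' ∨ k = k' then 1 else 0))) •
          (A j' k' * A j k))
    -- a spanning tree T of G with root r
    (T : SimpleGraph V) (hTG : T ≤ G) (hTtree : T.IsTree) (r : V)
    -- ω j is the (unique) path in T from the root r to j, of length len j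
    (len : V → ℕ) (ω : V → ℕ → V)
    (hω0 : ∀ j, ω j 0 = r) (hωend : ∀ j, ω j (len j) = j)
    (hωpath : ∀ j, ∀ t < len j, T.Adj (ω j t) (ω j (t + 1))) :
    -- every loop operator factors into the fundamental loop operators of its edges
    (∀ s ζ, IsPathIn G s ζ → ζ s = ζ 0 →
      pathOp A s ζ =
        (((List.range s).map (fun t =>
          pathOp A (len (ζ t) + 1 + len (ζ (t + 1)))
            (fundLoop len ω (ζ t) (ζ (t + 1))))).prod)) ∧
    -- fundamental loop operators of tree edges are trivial
    (∀ u v, T.Adj u v → pathOp A (len u + 1 + len v) (fundLoop len ω u v) = 1) ∧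
    -- consequently every loop operator lies in the subgroup generated by the
    -- fundamental loop operators of the non-tree edges
    (∀ s ζ, IsPathIn G s ζ → ζ s = ζ 0 →
      pathOp A s ζ ∈ Submonoid.closure
        {M | ∃ u v, G.Adj u v ∧ ¬ T.Adj u v ∧
          M = pathOp A (len u + 1 + len v) (fundLoop len ω u v)}) := by
  have hωG : ∀ j, IsPathIn G (len j) (ω j) := fun j t ht => hTG (hωpath j t ht)
  have hfactor : ∀ s ζ, IsPathIn G s ζ → ζ s = ζ 0 → pathOp A s ζ = _ := fun s ζ hζ hloop =>
    pathOp_eq_prod_pathOp_fundLoop A hsq hanti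
      (fun _ _ _ _ hab hxy => mul_eq_incSign_smul_mul A hanti hcomm hab hxy) hωend hωG hζ hloop
  have htree : ∀ u v, T.Adj u v → pathOp A (len u + 1 + len v) (fundLoop len ω u v) = 1 :=
    fun u v huv => pathOp_eq_one_of_isAcyclic A hTtree.isAcyclic
      (fun j k h => hsq j k (hTG h)) (fun j k h => hanti j k (hTG h))
      (fundLoop_isPathIn hωend hωpath huv) (by rw [fundLoop_length, fundLoop_zero, hω0, hω0])
  refine ⟨hfactor, htree, fun s ζ hζ hloop => ?_⟩
  rw [hfactor s ζ hζ hloop]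
  refine Submonoid.list_prod_mem _ fun M hM => ?_
  obtain ⟨t, ht, rfl⟩ := List.mem_map.1 hM
  by_cases hT : T.Adj (ζ t) (ζ (t + 1))
  · rw [htree _ _ hT]
    exact Submonoid.one_mem _
  · exact Submonoid.subset_closure ⟨_, _, hζ t (List.mem_range.1 ht), hT, rfl⟩

theorem stmt7 {V : Type*} [Fintype V] [DecidableEq V] (G : SimpleGraph V) {N : ℕ}
    (A : V → V → Matrix (Fin N) (Fin N) ℂ)
    (hherm : ∀ j k, G.Adj j k → (A j k)ᴴ = A j k)
    (hsq : ∀ j k, G.Adj j k → A j k * A j k = 1)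
    (hanti : ∀ j k, G.Adj j k → A k j = - A j k)
    (hcomm : ∀ j k j' k', G.Adj j k → G.Adj j' k' → s(j, k) ≠ s(j', k') →
      A j k * A j' k' =
        ((-1 : ℂ) ^ ((if j = j' ∨ j = k' then 1 else 0) + (if k = j' ∨ k = k' then 1 else 0))) •
          (A j' k' * A j k))
    (hGconn : G.Connected)
    -- a spanning tree T of G with root r
    (T : SimpleGraph V) (hTG : T ≤ G) (hTtree : T.IsTree) (r : V)
    -- ω j is the (unique) path in T from the root r to j, of length len j
    (len : V → ℕ) (ω : V → ℕ → V)
    (hω0 : ∀ j, ω j 0 = r) (hωend : ∀ j, ω j (len j) = j)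
    (hωpath : ∀ j, ∀ t < len j, T.Adj (ω j t) (ω j (t + 1))) :
    -- every loop operator factors into the fundamental loop operators of its edges
    (∀ s ζ, IsPathIn G s ζ → ζ s = ζ 0 →
      pathOp A s ζ =
        (((List.range s).map (fun t =>
          pathOp A (len (ζ t) + 1 + len (ζ (t + 1)))
            (fundLoop len ω (ζ t) (ζ (t + 1))))).prod)) ∧
    -- fundamental loop operators of tree edges are trivial
    (∀ u v, T.Adj u v → pathOp A (len u + 1 + len v) (fundLoop len ω u v) = 1) ∧
    -- consequently every loop operator lies in the subgroup generated by the
    -- fundamental loop operators of the non-tree edges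
    (∀ s ζ, IsPathIn G s ζ → ζ s = ζ 0 →
      pathOp A s ζ ∈ Submonoid.closure
        {M | ∃ u v, G.Adj u v ∧ ¬ T.Adj u v ∧
          M = pathOp A (len u + 1 + len v) (fundLoop len ω u v)}) :=
  stmt7_general G A hsq hanti hcomm T hTG hTtree r len ω hω0 hωend hωpath
end
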